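/- The one-point compactification K of the Λ-duplicate D is a scattered compact Hausdorff space which has property (*) but is not Gruenhage. -/

import Mathlib

/-- An element of Kurepa's tree `Λ`: an injective function `t : α → ω` with countable
ordinal domain `α` and coinfinite range.  The function is represented as a total function
on ordinals which takes the junk value `0` outside of the domain. -/
structure Lambda : Type 1 where
  toFun : Ordinal.{0} → ℕ
  dom : Ordinal.{0}
  countable : dom.card ≤ Cardinal.aleph0
  inj : ∀ β γ, β < dom → γ < dom → toFun β = toFun γ → β = γ
  coinfinite : {n : ℕ | ∀ β, β < dom → toFun β ≠ n}.Infinite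
  junk : ∀ β, ¬ β < dom → toFun β = 0

/-- The tree order on `Λ`: `s ≼ t` iff `t` extends `s`. -/
def Lambda.le (s t : Lambda) : Prop :=
  s.dom ≤ t.dom ∧ ∀ β, β < s.dom → s.toFun β = t.toFun β

/-- The strict tree order on `Λ`. -/
def Lambda.lt (s t : Lambda) : Prop := Lambda.le s t ∧ s ≠ t

/-- `r ≺ s` for `r ∈ Λ ∪ {0}` (`none` plays the role of the extra least element `0`). -/
def precLt : Option Lambda → Lambda → Prop
  | none, _ => True
  | some r, s => Lambda.lt r s

/-- The interval `(r, t] = {s ∈ Λ : r ≺ s ≼ t}`, with `r ∈ Λ ∪ {0}`. -/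
def lamIoc (r : Option Lambda) (t : Lambda) : Set Lambda :=
  {s | precLt r s ∧ Lambda.le s t}

/-- The position of the minimum of `t` on the ordinal interval `[δ, β)`. -/
noncomputable def minPos (t : Ordinal.{0} → ℕ) (δ β : Ordinal.{0}) : Ordinal.{0} :=
  sInf {ξ | δ ≤ ξ ∧ ξ < β ∧ ∀ η, δ ≤ η → η < β → t ξ ≤ t η}

lemma minPos_lt (t : Ordinal.{0} → ℕ) {δ β : Ordinal.{0}} (h : δ < β) : minPos t δ β < β := by
  have hne : {ξ : Ordinal.{0} | δ ≤ ξ ∧ ξ < β ∧ ∀ η, δ ≤ η → η < β → t ξ ≤ t η}.Nonempty := by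
    have h1 : {n : ℕ | ∃ ξ : Ordinal.{0}, δ ≤ ξ ∧ ξ < β ∧ t ξ = n}.Nonempty :=
      ⟨t δ, δ, le_refl _, h, rfl⟩
    obtain ⟨ξ, hξ1, hξ2, hξ3⟩ := Nat.sInf_mem h1
    refine ⟨ξ, hξ1, hξ2, fun η h1' h2' => ?_⟩
    rw [hξ3]
    exact Nat.sInf_le ⟨η, h1', h2', rfl⟩
  obtain ⟨ξ, hξ⟩ := hne
  calc minPos t δ β ≤ ξ := csInf_le (OrderBot.bddBelow _) hξ
    _ < β := hξ.2.1

/-- The sequence `τ` computed from the starting ordinal `β₀` downwards: `τ` is obtained by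
repeatedly passing from `β` to the position of the minimum of `t` on `[δ, β)`, stopping upon
reaching `δ`.  The resulting finite sequence `(β_k, …, β_1)` is recorded as a list in the
order `[β_k, …, β_1]` (so concatenation of the lists corresponds to `⌢`). -/
noncomputable def tauFrom (δ : Ordinal.{0}) (t : Ordinal.{0} → ℕ) : Ordinal.{0} → List Ordinal.{0} :=
  WellFounded.fix wellFounded_lt
    (fun β IH => if h : δ < β then IH (minPos t δ β) (minPos_lt t h) ++ [minPos t δ β] else [])

/-- The finite sequence `τ(s,t)` of ordinals, for `s ≼ t` in `Λ`. -/
noncomputable def tau (s t : Lambda) : List Ordinal.{0} :=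
  tauFrom s.dom t.toFun t.dom

/-- `ℓ(s,t)`, the length of `τ(s,t)`. -/
noncomputable def ell (s t : Lambda) : ℕ := (tau s t).length

/-- The underlying set of the `Λ`-duplicate: `D = Λ × {1, -1}`. -/
abbrev Dup : Type 1 := Lambda × ℤˣ

/-- The basic open sets `W(r,t,i)` of the `Λ`-duplicate. -/
noncomputable def Wset (r : Option Lambda) (t : Lambda) (i : ℤˣ) : Set Dup :=
  {q | q.1 ∈ lamIoc r t ∧ q.2 = (-1) ^ ell q.1 t * i}

/-- The collection of all basic open sets `W(r,t,i)` with `r ≺ t`. -/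
noncomputable def WBasis : Set (Set Dup) :=
  {S | ∃ (r : Option Lambda) (t : Lambda) (i : ℤˣ), precLt r t ∧ S = Wset r t i}

/-- The topology of the `Λ`-duplicate, generated by the basic sets `W(r,t,i)`. -/
noncomputable instance : TopologicalSpace Dup := TopologicalSpace.generateFrom WBasis

/-- Property (*) of Orihuela, Smith and Troyanski: there is a sequence `(𝒰 n)` of families of
open sets such that any two distinct points `x, y` admit `n` with `{x,y} ∩ ⋃ 𝒰 n` nonempty and
`{x,y} ∩ U` at most a singleton for every `U ∈ 𝒰 n`. -/
def HasStarProp (X : Type*) [TopologicalSpace X] : Prop :=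
  ∃ U : ℕ → Set (Set X),
    (∀ n, ∀ V ∈ U n, IsOpen V) ∧
    ∀ x y : X, x ≠ y → ∃ n,
      (({x, y} : Set X) ∩ ⋃₀ U n).Nonempty ∧
      ∀ V ∈ U n, (({x, y} : Set X) ∩ V).Subsingleton

/-- A topological space is Gruenhage if there are a sequence `(𝒰 n)` of families of open sets
and sets `R n` such that any two distinct points are separated by some member of some `𝒰 n`
(i.e. `{x,y} ∩ U` is a singleton), and two distinct members of `𝒰 n` always intersect
exactly in `R n`. -/
def Gruenhage (X : Type*) [TopologicalSpace X] : Prop :=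
  ∃ (U : ℕ → Set (Set X)) (R : ℕ → Set X),
    (∀ n, ∀ V ∈ U n, IsOpen V) ∧
    (∀ x y : X, x ≠ y → ∃ n, ∃ V ∈ U n, ∃ z, ({x, y} : Set X) ∩ V = {z}) ∧
    (∀ n, ∀ V ∈ U n, ∀ V' ∈ U n, V ≠ V' → V ∩ V' = R n)

/-!
`ℓ(s, t)` counts the positions of `[dom s, dom t)` where `t` reaches a new strict running
minimum. Only finitely many values of `u` occur on the walk from `u` to `t`, so near `t` the
parity of `ℓ(·, u)` is that of `ℓ(·, t) + ℓ(t, u)`. This additivity makes the sets `W(r, t, i)` a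
basis, and makes `β ↦ (t ↾ β, (-1)^ℓ(t ↾ β, t) i)` continuous on the ordinals, so each
`W(q, t, i)` is a continuous image of a compact ordinal interval. Hence `D` is a locally compact
Hausdorff space, and `K` is compact and Hausdorff. `K` is scattered because points of minimal
height are isolated. Property (*) separates `s < t` using the value of the minimum of `t` on
`[dom s, dom t)`.

If `K` were Gruenhage, each pair of twins `(u, ±1)` would be separated by some `V u ∈ 𝒰 (n u)`
that contains a basic set `W(q u, u, e u)` around `(u, e u)` and misses `(u, -e u)`. A diagonal
`ω`-chain with pairwise odd walks, together with its union, yields `z < c₁ < c₂` with the same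
`n` and `e` and with `q c₁, q c₂` below `z`. Odd walks flip signs, so `(z, -e)` lies in
`V c₁ ∩ V c₂`, while `(c₁, -e)` lies in `V c₂` but not in `V c₁`. Distinct members of `𝒰 n` all
meet in `R n`, so `(z, -e)` would then lie in `V z`, which is impossible.
-/
namespace Lambda

lemma ext_of_dom_eq {s t : Lambda} (hd : s.dom = t.dom)
    (hf : ∀ β < s.dom, s.toFun β = t.toFun β) : s = t := by
  obtain ⟨f, d, _, _, _, hj⟩ := s
  obtain ⟨f', d', _, _, _, hj'⟩ := t
  dsimp only at hd hf
  subst hd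
  have : f = f' := funext fun β => by
    by_cases h : β < d
    · exact hf β h
    · rw [hj β h, hj' β h]
  subst this
  rfl

lemma eq_of_le_of_dom_le {s t : Lambda} (h : s.le t) (hd : t.dom ≤ s.dom) : s = t :=
  ext_of_dom_eq (le_antisymm h.1 hd) h.2

lemma le_refl' (s : Lambda) : s.le s := ⟨le_rfl, fun _ _ => rfl⟩

instance : PartialOrder Lambda where
  le := Lambda.le
  lt := Lambda.lt
  le_refl := le_refl'
  le_trans _ _ _ h₁ h₂ :=
    ⟨h₁.1.trans h₂.1, fun β hβ => (h₁.2 β hβ).trans (h₂.2 β (hβ.trans_le h₁.1))⟩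
  le_antisymm _ _ h₁ h₂ := eq_of_le_of_dom_le h₁ h₂.1
  lt_iff_le_not_ge _ _ :=
    ⟨fun h => ⟨h.1, fun h' => h.2 (eq_of_le_of_dom_le h.1 h'.1)⟩,
      fun h => ⟨h.1, fun he => h.2 (he ▸ le_refl' _)⟩⟩

lemma le_iff {s t : Lambda} :
    s ≤ t ↔ s.dom ≤ t.dom ∧ ∀ β < s.dom, s.toFun β = t.toFun β :=
  Iff.rfl

lemma dom_mono : Monotone dom := fun _ _ h => (le_iff.1 h).1

lemma toFun_eq_of_le {s t : Lambda} (h : s ≤ t) {β : Ordinal} (hβ : β < s.dom) :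
    s.toFun β = t.toFun β := (le_iff.1 h).2 β hβ

lemma le_of_le_of_dom_le {s t u : Lambda} (hs : s ≤ u) (ht : t ≤ u) (hd : s.dom ≤ t.dom) :
    s ≤ t :=
  le_iff.2 ⟨hd, fun _ hβ => (toFun_eq_of_le hs hβ).trans (toFun_eq_of_le ht (hβ.trans_le hd)).symm⟩

lemma lt_iff_le_and_dom_lt {s t : Lambda} : s < t ↔ s ≤ t ∧ s.dom < t.dom :=
  ⟨fun h => ⟨h.le, (dom_mono h.le).lt_of_ne fun hd =>
      h.ne (le_antisymm h.le (le_of_le_of_dom_le le_rfl h.le hd.ge))⟩,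
    fun h => h.1.lt_of_ne fun he => h.2.ne (he ▸ rfl)⟩

lemma dom_strictMono : StrictMono dom := fun _ _ h => (lt_iff_le_and_dom_lt.1 h).2

lemma le_total_of_le {s t u : Lambda} (hs : s ≤ u) (ht : t ≤ u) : s ≤ t ∨ t ≤ s :=
  (le_total s.dom t.dom).imp (le_of_le_of_dom_le hs ht) (le_of_le_of_dom_le ht hs)

def range (t : Lambda) : Set ℕ := t.toFun '' Set.Iio t.dom

lemma infinite_compl_range (t : Lambda) : t.rangeᶜ.Infinite := by
  convert t.coinfinite using 1
  ext n
  simp [range]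

lemma range_mono {s t : Lambda} (h : s ≤ t) : s.range ⊆ t.range := by
  rintro _ ⟨β, hβ, rfl⟩
  exact ⟨β, hβ.trans_le (dom_mono h), (toFun_eq_of_le h hβ).symm⟩

noncomputable def restrict (t : Lambda) (δ : Ordinal.{0}) : Lambda where
  toFun β := if β < δ then t.toFun β else 0
  dom := min δ t.dom
  countable := (Ordinal.card_le_card (min_le_right _ _)).trans t.countable
  inj β γ hβ hγ he := by
    rw [lt_min_iff] at hβ hγ
    rw [if_pos hβ.1, if_pos hγ.1] at he
    exact t.inj β γ hβ.2 hγ.2 he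
  coinfinite := t.coinfinite.mono fun n hn β hβ => by
    rw [lt_min_iff] at hβ
    simpa only [if_pos hβ.1] using hn β hβ.2
  junk β hβ := by
    rw [lt_min_iff, not_and_or] at hβ
    split_ifs with h
    · exact t.junk β (hβ.resolve_left (not_not.2 h))
    · rfl

lemma restrict_le (t : Lambda) (δ : Ordinal) : t.restrict δ ≤ t :=
  le_iff.2 ⟨min_le_right _ _, fun _ hβ => if_pos (lt_min_iff.1 hβ).1⟩

lemma restrict_of_dom_le {t : Lambda} {δ : Ordinal} (h : t.dom ≤ δ) : t.restrict δ = t :=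
  le_antisymm (restrict_le t δ) (le_of_le_of_dom_le le_rfl (restrict_le t δ) (le_min h le_rfl))

lemma restrict_lt {t : Lambda} {δ : Ordinal} (h : δ < t.dom) : t.restrict δ < t :=
  lt_iff_le_and_dom_lt.2 ⟨restrict_le t δ, min_lt_of_left_lt h⟩

lemma restrict_dom_of_le {t : Lambda} {δ : Ordinal} (h : δ ≤ t.dom) :
    (t.restrict δ).dom = δ :=
  min_eq_left h

lemma eq_restrict_of_le {s t : Lambda} (h : s ≤ t) : s = t.restrict s.dom :=
  le_antisymm (le_of_le_of_dom_le h (restrict_le t _) (restrict_dom_of_le (dom_mono h)).ge)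
    (le_of_le_of_dom_le (restrict_le t _) h (restrict_dom_of_le (dom_mono h)).le)

/-- The common predecessor is `s` restricted to the first point where `s` and `t` differ. -/
lemma exists_lt_of_not_le {s t : Lambda} (hst : ¬ s ≤ t) (hts : ¬ t ≤ s) :
    ∃ r, r < s ∧ r < t ∧ ∀ v, r < v → v ≤ s → ¬ v ≤ t := by
  wlog hd : s.dom ≤ t.dom generalizing s t
  · obtain ⟨r, hrt, hrs, h⟩ := this hts hst (le_of_not_ge hd)
    exact ⟨r, hrs, hrt, fun v hrv hvs hvt => h v hrv hvt hvs⟩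
  obtain ⟨δ, ⟨hδs, hδ⟩, hmin⟩ := wellFounded_lt.has_min {β | β < s.dom ∧ s.toFun β ≠ t.toFun β}
    (by
      by_contra! h
      exact hst (le_iff.2 ⟨hd, fun β hβ => by_contra fun hne => h.subset ⟨hβ, hne⟩⟩))
  have hrs : s.restrict δ < s := restrict_lt hδs
  have hrt : s.restrict δ ≤ t := le_iff.2 ⟨(restrict_dom_of_le hδs.le).trans_le (hδs.le.trans hd),
    fun β hβ => by
      rw [restrict_dom_of_le hδs.le] at hβ
      rw [toFun_eq_of_le (restrict_le s δ) (by rwa [restrict_dom_of_le hδs.le])]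
      exact by_contra fun hne => hmin β ⟨hβ.trans hδs, hne⟩ hβ⟩
  refine ⟨s.restrict δ, hrs, lt_iff_le_and_dom_lt.2 ⟨hrt, ?_⟩, fun v hrv hvs hvt => hδ ?_⟩
  · exact (restrict_dom_of_le hδs.le).trans_lt (hδs.trans_le hd)
  · have hδv : δ < v.dom := restrict_dom_of_le hδs.le ▸ dom_strictMono hrv
    rw [← toFun_eq_of_le hvs hδv, ← toFun_eq_of_le hvt hδv]

end Lambda

/-! ### Walks -/

section Walk

variable {f : Ordinal.{0} → ℕ} {δ β : Ordinal.{0}}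

lemma minPos_spec (f : Ordinal.{0} → ℕ) (h : δ < β) :
    δ ≤ minPos f δ β ∧ minPos f δ β < β ∧ ∀ η, δ ≤ η → η < β → f (minPos f δ β) ≤ f η := by
  obtain ⟨ξ, ⟨hδξ, hξβ⟩, hmin⟩ :=
    (InvImage.wf f wellFounded_lt).has_min (Set.Ico δ β) ⟨δ, le_rfl, h⟩
  exact csInf_mem (s := {ξ | δ ≤ ξ ∧ ξ < β ∧ ∀ η, δ ≤ η → η < β → f ξ ≤ f η})
    ⟨ξ, hδξ, hξβ, fun η h₁ h₂ => not_lt.1 (hmin η ⟨h₁, h₂⟩)⟩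

lemma lt_of_lt_minPos (h : δ < β) {η : Ordinal} (hδη : δ ≤ η) (hη : η < minPos f δ β) :
    f (minPos f δ β) < f η := by
  obtain ⟨-, hmβ, hmin⟩ := minPos_spec f h
  refine (hmin η hδη (hη.trans hmβ)).lt_of_ne fun he => hη.not_ge (csInf_le' ?_)
  exact ⟨hδη, hη.trans hmβ, fun η' h₁ h₂ => he ▸ hmin η' h₁ h₂⟩

lemma tauFrom_eq (δ : Ordinal.{0}) (f : Ordinal.{0} → ℕ) (β : Ordinal.{0}) :
    tauFrom δ f β =
      if δ < β then tauFrom δ f (minPos f δ β) ++ [minPos f δ β] else [] := by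
  rw [tauFrom, WellFounded.fix_eq]
  rfl

def runningMinima (δ : Ordinal.{0}) (f : Ordinal.{0} → ℕ) (β : Ordinal.{0}) : Set Ordinal.{0} :=
  {ξ | δ ≤ ξ ∧ ξ < β ∧ ∀ η, δ ≤ η → η < ξ → f ξ < f η}

/-- Each step of the walk goes to the first minimum of `f` below the current point, so the steps
are exactly the running minima. -/
lemma mem_tauFrom_iff {ξ : Ordinal} : ξ ∈ tauFrom δ f β ↔ ξ ∈ runningMinima δ f β := by
  induction β using WellFoundedLT.induction with
  | ind β ih =>
  rw [tauFrom_eq]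
  split_ifs with h
  · obtain ⟨hδm, hmβ, hmin⟩ := minPos_spec f h
    rw [List.mem_append, List.mem_singleton, ih _ hmβ]
    constructor
    · rintro (⟨h₁, h₂, h₃⟩ | rfl)
      · exact ⟨h₁, h₂.trans hmβ, h₃⟩
      · exact ⟨hδm, hmβ, fun η => lt_of_lt_minPos h⟩
    · rintro ⟨h₁, h₂, h₃⟩
      rcases lt_trichotomy ξ (minPos f δ β) with hlt | heq | hgt
      · exact Or.inl ⟨h₁, hlt, h₃⟩
      · exact Or.inr heq
      · exact absurd (h₃ _ hδm hgt) (not_lt.2 (hmin ξ h₁ h₂))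
  · simp only [List.not_mem_nil, false_iff]
    exact fun hξ => h (hξ.1.trans_lt hξ.2.1)

lemma tauFrom_nodup (δ : Ordinal.{0}) (f : Ordinal.{0} → ℕ) (β : Ordinal.{0}) :
    (tauFrom δ f β).Nodup := by
  induction β using WellFoundedLT.induction with
  | ind β ih =>
  rw [tauFrom_eq]
  split_ifs with h
  · have hmβ := minPos_lt f h
    refine (ih _ hmβ).append (List.nodup_singleton _) ?_
    intro ξ hξ hξm
    rw [List.mem_singleton.1 hξm] at hξ
    exact (mem_tauFrom_iff.1 hξ).2.1.false
  · exact List.nodup_nil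

lemma runningMinima_eq_toFinset :
    runningMinima δ f β = ↑(tauFrom δ f β).toFinset := by
  ext ξ
  rw [Finset.mem_coe, List.mem_toFinset, mem_tauFrom_iff]

lemma runningMinima_finite : (runningMinima δ f β).Finite := by
  rw [runningMinima_eq_toFinset]
  exact Finset.finite_toSet _

lemma ell_eq_ncard (s t : Lambda) : ell s t = (runningMinima s.dom t.toFun t.dom).ncard := by
  rw [runningMinima_eq_toFinset, Set.ncard_coe_finset,
    List.toFinset_card_of_nodup (tauFrom_nodup _ _ _), ell, tau]

lemma runningMinima_congr {g : Ordinal.{0} → ℕ} (h : ∀ ξ, δ ≤ ξ → ξ < β → f ξ = g ξ) :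
    runningMinima δ f β = runningMinima δ g β := by
  ext ξ
  refine and_congr_right fun h₁ => and_congr_right fun h₂ => forall₂_congr fun η hη =>
    imp_congr_right fun hηξ => ?_
  rw [h ξ h₁ h₂, h η hη (hηξ.trans h₂)]

lemma runningMinima_split {γ : Ordinal} (hδγ : δ ≤ γ) (hγβ : γ ≤ β) :
    runningMinima δ f β =
      runningMinima δ f γ ∪ {ξ ∈ runningMinima γ f β | ∀ η, δ ≤ η → η < γ → f ξ < f η} := by
  ext ξ
  constructor
  · rintro ⟨h₁, h₂, h₃⟩
    rcases lt_or_ge ξ γ with h | h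
    · exact Or.inl ⟨h₁, h, h₃⟩
    · exact Or.inr ⟨⟨h, h₂, fun η hη => h₃ η (hδγ.trans hη)⟩,
        fun η hη hηγ => h₃ η hη (hηγ.trans_le h)⟩
  · rintro (⟨h₁, h₂, h₃⟩ | ⟨⟨h₁, h₂, h₃⟩, h₄⟩)
    · exact ⟨h₁, h₂.trans_le hγβ, h₃⟩
    · refine ⟨hδγ.trans h₁, h₂, fun η hη hηξ => ?_⟩
      rcases lt_or_ge η γ with h | h
      · exact h₄ η hη h
      · exact h₃ η h hηξ

end Walk

namespace Lambda

lemma ell_self (t : Lambda) : ell t t = 0 := by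
  rw [ell, tau, tauFrom_eq, if_neg (lt_irrefl _)]
  rfl

lemma ell_eq_add_ncard {s t u : Lambda} (hst : s ≤ t) (htu : t ≤ u) :
    ell s u = ell s t + {ξ ∈ runningMinima t.dom u.toFun u.dom |
      ∀ η, s.dom ≤ η → η < t.dom → u.toFun ξ < u.toFun η}.ncard := by
  have hcongr : runningMinima s.dom u.toFun t.dom = runningMinima s.dom t.toFun t.dom :=
    runningMinima_congr fun ξ _ hξ => (toFun_eq_of_le htu hξ).symm
  rw [ell_eq_ncard, ell_eq_ncard, runningMinima_split (dom_mono hst) (dom_mono htu), hcongr,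
    Set.ncard_union_eq _ runningMinima_finite (runningMinima_finite.subset fun _ h => h.1)]
  exact Set.disjoint_left.2 fun ξ h₁ h₂ => h₁.2.1.not_ge h₂.1.1

lemma ell_add_of_forall_lt {s t u : Lambda} (hst : s ≤ t) (htu : t ≤ u)
    (h : ∀ ξ ∈ runningMinima t.dom u.toFun u.dom,
      ∀ η, s.dom ≤ η → η < t.dom → u.toFun ξ < u.toFun η) :
    ell s u = ell s t + ell t u := by
  rw [ell_eq_add_ncard hst htu, ell_eq_ncard t u]
  congr 2
  exact Set.sep_eq_self_iff_mem_true.2 h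

lemma ell_eq_of_forall_exists_le {s t u : Lambda} (hst : s ≤ t) (htu : t ≤ u)
    (h : ∀ ξ ∈ runningMinima t.dom u.toFun u.dom,
      ∃ η, s.dom ≤ η ∧ η < t.dom ∧ u.toFun η ≤ u.toFun ξ) :
    ell s u = ell s t := by
  rw [ell_eq_add_ncard hst htu, add_eq_left, Set.ncard_eq_zero (runningMinima_finite.subset
    fun _ h => h.1)]
  refine Set.eq_empty_of_forall_notMem fun ξ ⟨hξ, hlt⟩ => ?_
  obtain ⟨η, h₁, h₂, hle⟩ := h ξ hξ
  exact (hlt η h₁ h₂).not_ge hle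

lemma ell_eq_of_forall_runningMinima_lt {s t u : Lambda} (hst : s ≤ t) (htu : t ≤ u)
    (h : ∀ ξ ∈ runningMinima s.dom u.toFun u.dom, ξ < t.dom) : ell s u = ell s t := by
  rw [ell_eq_add_ncard hst htu, add_eq_left, Set.ncard_eq_zero (runningMinima_finite.subset
    fun _ h => h.1)]
  refine Set.eq_empty_of_forall_notMem fun ξ hξ => (h ξ ?_).not_ge hξ.1.1
  rw [runningMinima_split (dom_mono hst) (dom_mono htu)]
  exact Or.inr hξ

/-- By injectivity only finitely many positions of `t` carry a value at most the values of `u`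
on the walk from `u` to `t`; above them, every such step stays a running minimum. -/
lemma exists_lt_dom_forall_ell_add {t u : Lambda} (htu : t ≤ u) (h0 : 0 < t.dom) :
    ∃ γ < t.dom, ∀ s ≤ t, γ < s.dom → ell s u = ell s t + ell t u := by
  obtain ⟨N, hN⟩ := (runningMinima_finite (δ := t.dom) (f := u.toFun) (β := u.dom)).image
    u.toFun |>.bddAbove
  set P := {η | η < t.dom ∧ u.toFun η ≤ N}
  have hP : P.Finite := Set.Finite.of_finite_image
    ((Set.finite_Iic N).subset (by rintro _ ⟨η, hη, rfl⟩; exact hη.2))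
    fun a ha b hb => u.inj a b (ha.1.trans_le (dom_mono htu)) (hb.1.trans_le (dom_mono htu))
  refine ⟨sSup P, ?_, fun s hst hs => ell_add_of_forall_lt hst htu fun ξ hξ η h₁ h₂ => ?_⟩
  · rcases P.eq_empty_or_nonempty with he | hne
    · rwa [he, csSup_empty]
    · exact (hne.csSup_mem hP).1
  · refine (hN ⟨ξ, hξ, rfl⟩).trans_lt (not_le.1 fun hle => ?_)
    exact (le_csSup hP.bddAbove ⟨h₂, hle⟩).not_gt (hs.trans_le h₁)

end Lambda

/-! ### The topology of the Λ-duplicate -/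

def domOpt : Option Lambda → Ordinal.{0}
  | none => 0
  | some r => r.dom

lemma domOpt_lt_of_precLt {q : Option Lambda} {t : Lambda} (h : precLt q t) (h0 : 0 < t.dom) :
    domOpt q < t.dom := by
  cases q with
  | none => exact h0
  | some r => exact Lambda.dom_strictMono h

lemma precLt_of_le {q : Option Lambda} {s t : Lambda} (hq : precLt q t) (hst : s ≤ t)
    (hd : domOpt q < s.dom) : precLt q s := by
  cases q with
  | none => trivial
  | some r =>
    exact Lambda.lt_iff_le_and_dom_lt.2 ⟨Lambda.le_of_le_of_dom_le (le_of_lt hq) hst hd.le, hd⟩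

lemma precLt_none (t : Lambda) : precLt none t := trivial

lemma mem_Wset {p : Dup} {r : Option Lambda} {t : Lambda} {i : ℤˣ} :
    p ∈ Wset r t i ↔ (precLt r p.1 ∧ p.1 ≤ t) ∧ p.2 = (-1) ^ ell p.1 t * i :=
  Iff.rfl

lemma mem_Wset_self {r : Option Lambda} {t : Lambda} (h : precLt r t) (i : ℤˣ) :
    ((t, i) : Dup) ∈ Wset r t i :=
  mem_Wset.2 ⟨⟨h, le_rfl⟩, by rw [Lambda.ell_self, pow_zero, one_mul]⟩

lemma Wset_subset_Wset_of_imp {q q' : Option Lambda} {t : Lambda} {i : ℤˣ}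
    (h : ∀ s, precLt q s → s ≤ t → precLt q' s) : Wset q t i ⊆ Wset q' t i :=
  fun _ hp => ⟨⟨h _ hp.1.1 hp.1.2, hp.1.2⟩, hp.2⟩

lemma exists_Wset_subset_inter {q₁ q₂ : Option Lambda} {t : Lambda} (h₁ : precLt q₁ t)
    (h₂ : precLt q₂ t) (i : ℤˣ) :
    ∃ q, precLt q t ∧ Wset q t i ⊆ Wset q₁ t i ∩ Wset q₂ t i := by
  match q₁, q₂, h₁, h₂ with
  | none, q₂, _, h₂ =>
    exact ⟨q₂, h₂, fun _ hp => ⟨Wset_subset_Wset_of_imp (fun s _ _ => precLt_none s) hp, hp⟩⟩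
  | some r₁, none, h₁, _ =>
    exact ⟨some r₁, h₁, fun _ hp => ⟨hp, Wset_subset_Wset_of_imp (fun s _ _ => precLt_none s) hp⟩⟩
  | some r₁, some r₂, h₁, h₂ =>
    rcases Lambda.le_total_of_le (le_of_lt h₁) (le_of_lt h₂) with h | h
    · exact ⟨some r₂, h₂, fun _ hp =>
        ⟨Wset_subset_Wset_of_imp (fun _ hs _ => lt_of_le_of_lt h hs) hp, hp⟩⟩
    · exact ⟨some r₁, h₁, fun _ hp =>
        ⟨hp, Wset_subset_Wset_of_imp (fun _ hs _ => lt_of_le_of_lt h hs) hp⟩⟩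

lemma exists_precLt_forall_ell_add {t u : Lambda} (htu : t ≤ u) {r : Option Lambda}
    (hr : precLt r t) :
    ∃ q, precLt q t ∧ ∀ s, precLt q s → s ≤ t → precLt r s ∧ ell s u = ell s t + ell t u := by
  rcases (zero_le (a := t.dom)).eq_or_lt with h0 | h0
  · refine ⟨r, hr, fun s hs hst => ?_⟩
    obtain rfl : s = t := le_antisymm hst (Lambda.le_of_le_of_dom_le le_rfl hst (h0 ▸ zero_le))
    rw [Lambda.ell_self, zero_add]
    exact ⟨hs, rfl⟩
  obtain ⟨γ, hγ, hadd⟩ := Lambda.exists_lt_dom_forall_ell_add htu h0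
  have hlt : max γ (domOpt r) < t.dom := max_lt hγ (domOpt_lt_of_precLt hr h0)
  refine ⟨some (t.restrict (max γ (domOpt r))), Lambda.restrict_lt hlt, fun s hs hst => ?_⟩
  have hds : max γ (domOpt r) < s.dom :=
    Lambda.restrict_dom_of_le hlt.le ▸ Lambda.dom_strictMono (show _ < s from hs)
  exact ⟨precLt_of_le hr hst (lt_of_le_of_lt (le_max_right _ _) hds),
    hadd s hst (lt_of_le_of_lt (le_max_left _ _) hds)⟩

lemma exists_Wset_subset_Wset {r : Option Lambda} {t u : Lambda} {i k : ℤˣ}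
    (h : ((t, i) : Dup) ∈ Wset r u k) : ∃ q, precLt q t ∧ Wset q t i ⊆ Wset r u k := by
  obtain ⟨⟨hr, htu⟩, hi⟩ := mem_Wset.1 h
  obtain ⟨q, hq, hadd⟩ := exists_precLt_forall_ell_add htu hr
  refine ⟨q, hq, fun ⟨s, j⟩ hp => ?_⟩
  obtain ⟨⟨hs, hst⟩, hj⟩ := mem_Wset.1 hp
  refine mem_Wset.2 ⟨⟨(hadd s hs hst).1, hst.trans htu⟩, ?_⟩
  dsimp only at hj hi hst ⊢
  rw [hj, hi, (hadd s hs hst).2, pow_add, mul_assoc]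

lemma isTopologicalBasis_WBasis : TopologicalSpace.IsTopologicalBasis WBasis where
  exists_subset_inter := by
    rintro _ ⟨r₁, u₁, k₁, -, rfl⟩ _ ⟨r₂, u₂, k₂, -, rfl⟩ ⟨t, i⟩ ⟨hp₁, hp₂⟩
    obtain ⟨q₁, hq₁, hsub₁⟩ := exists_Wset_subset_Wset hp₁
    obtain ⟨q₂, hq₂, hsub₂⟩ := exists_Wset_subset_Wset hp₂
    obtain ⟨q, hq, hsub⟩ := exists_Wset_subset_inter hq₁ hq₂ i
    exact ⟨_, ⟨q, t, i, hq, rfl⟩, mem_Wset_self hq i,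
      hsub.trans (Set.inter_subset_inter hsub₁ hsub₂)⟩
  sUnion_eq := Set.eq_univ_of_forall fun ⟨t, i⟩ =>
    ⟨_, ⟨none, t, i, trivial, rfl⟩, mem_Wset_self (precLt_none t) i⟩
  eq_generateFrom := rfl

lemma isOpen_Wset {r : Option Lambda} {t : Lambda} (h : precLt r t) (i : ℤˣ) :
    IsOpen (Wset r t i) :=
  isTopologicalBasis_WBasis.isOpen ⟨r, t, i, h, rfl⟩

lemma exists_Wset_subset_of_mem_nhds {U : Set Dup} {t : Lambda} {i : ℤˣ}
    (hU : U ∈ nhds ((t, i) : Dup)) : ∃ q, precLt q t ∧ Wset q t i ⊆ U := by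
  obtain ⟨_, ⟨r, u, k, -, rfl⟩, hmem, hsub⟩ := isTopologicalBasis_WBasis.mem_nhds_iff.1 hU
  obtain ⟨q, hq, hsub'⟩ := exists_Wset_subset_Wset hmem
  exact ⟨q, hq, hsub'.trans hsub⟩

lemma disjoint_Wset_none_some (s t : Lambda) (i j : ℤˣ) :
    Disjoint (Wset none s i) (Wset (some s) t j) :=
  Set.disjoint_left.2 fun _ hp hp' =>
    (lt_of_lt_of_le (mem_Wset.1 hp').1.1 (mem_Wset.1 hp).1.2).false

instance : T2Space Dup := by
  refine ⟨fun ⟨s, i⟩ ⟨t, j⟩ hne => ?_⟩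
  suffices ∃ q q', precLt q s ∧ precLt q' t ∧ Disjoint (Wset q s i) (Wset q' t j) by
    obtain ⟨q, q', hq, hq', hd⟩ := this
    exact ⟨_, _, isOpen_Wset hq i, isOpen_Wset hq' j, mem_Wset_self hq i, mem_Wset_self hq' j, hd⟩
  by_cases hst : s ≤ t <;> by_cases hts : t ≤ s
  · obtain rfl := le_antisymm hst hts
    have hij : i ≠ j := fun h => hne (h ▸ rfl)
    refine ⟨none, none, trivial, trivial, Set.disjoint_left.2 fun _ hp hp' => hij ?_⟩
    exact mul_left_cancel ((mem_Wset.1 hp).2.symm.trans (mem_Wset.1 hp').2)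
  · exact ⟨none, some s, trivial, lt_of_le_not_ge hst hts, disjoint_Wset_none_some s t i j⟩
  · exact ⟨some t, none, lt_of_le_not_ge hts hst, trivial,
      (disjoint_Wset_none_some t s j i).symm⟩
  · obtain ⟨r, hrs, hrt, hdisj⟩ := Lambda.exists_lt_of_not_le hst hts
    exact ⟨some r, some r, hrs, hrt, Set.disjoint_left.2 fun _ hp hp' =>
      hdisj _ (mem_Wset.1 hp).1.1 (mem_Wset.1 hp).1.2 (mem_Wset.1 hp').1.2⟩

noncomputable def branchPt (t : Lambda) (i : ℤˣ) (β : Ordinal.{0}) : Dup :=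
  (t.restrict β, (-1) ^ ell (t.restrict β) t * i)

/-- Near a limit height `o`, additivity of `ℓ` near `t.restrict o` turns the signs twisted by `t`
into the ones twisted by `t.restrict o`. -/
lemma continuous_branchPt (t : Lambda) (i : ℤˣ) : Continuous (branchPt t i) := by
  refine continuous_def.2 fun U hU => SuccOrder.isOpen_iff.2 fun o ho hlim => ?_
  by_cases hto : t.dom < o
  · refine ⟨t.dom, hto, fun β hβ => ?_⟩
    have : t.restrict β = t.restrict o := by
      rw [Lambda.restrict_of_dom_le hβ.1.le, Lambda.restrict_of_dom_le hto.le]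
    rwa [Set.mem_preimage, branchPt, this]
  have hdom : (t.restrict o).dom = o := Lambda.restrict_dom_of_le (not_lt.1 hto)
  obtain ⟨q, hq, hsub⟩ := exists_Wset_subset_of_mem_nhds (hU.mem_nhds ho)
  obtain ⟨q', hq', hadd⟩ := exists_precLt_forall_ell_add (Lambda.restrict_le t o) hq
  refine ⟨domOpt q', hdom ▸ domOpt_lt_of_precLt hq' (by rw [hdom]; exact hlim.pos),
    fun β hβ => hsub ?_⟩
  have hβo : t.restrict β ≤ t.restrict o := Lambda.le_of_le_of_dom_le (Lambda.restrict_le t β)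
    (Lambda.restrict_le t o) (min_le_min_right _ hβ.2.le)
  have hdβ : domOpt q' < (t.restrict β).dom := by
    rw [Lambda.restrict_dom_of_le (hβ.2.le.trans (not_lt.1 hto))]
    exact hβ.1
  obtain ⟨hqβ, hℓ⟩ := hadd _ (precLt_of_le hq' hβo hdβ) hβo
  refine mem_Wset.2 ⟨⟨hqβ, hβo⟩, ?_⟩
  simp only [branchPt, hℓ, pow_add, mul_assoc]

lemma isCompact_setOf_precLt_restrict {q : Option Lambda} {t : Lambda} (hq : precLt q t) :
    IsCompact {β | β ≤ t.dom ∧ precLt q (t.restrict β)} := by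
  cases q with
  | none =>
    convert isCompact_Icc (a := 0) (b := t.dom) using 1
    ext β
    simp [precLt]
  | some r =>
    convert isCompact_Icc (a := Order.succ r.dom) (b := t.dom) using 1
    rw [Order.Icc_succ_left]
    ext β
    refine and_comm.trans (and_congr_left fun hβ => ⟨fun h => ?_, fun h => ?_⟩)
    · have := Lambda.dom_strictMono h
      rwa [Lambda.restrict_dom_of_le hβ] at this
    · exact precLt_of_le (q := some r) hq (Lambda.restrict_le t β)
        (by rw [Lambda.restrict_dom_of_le hβ]; exact h)

lemma Wset_eq_image_branchPt {q : Option Lambda} {t : Lambda} (i : ℤˣ) :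
    Wset q t i = branchPt t i '' {β | β ≤ t.dom ∧ precLt q (t.restrict β)} := by
  ext ⟨s, j⟩
  constructor
  · intro hp
    obtain ⟨⟨hq, hst⟩, hj⟩ := mem_Wset.1 hp
    dsimp only at hq hj hst
    refine ⟨s.dom, ⟨Lambda.dom_mono hst, ?_⟩, ?_⟩
    · rwa [← Lambda.eq_restrict_of_le hst]
    · rw [branchPt, ← Lambda.eq_restrict_of_le hst, hj]
  · rintro ⟨β, ⟨-, hq⟩, he⟩
    rw [← he]
    exact mem_Wset.2 ⟨⟨hq, Lambda.restrict_le t β⟩, rfl⟩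

lemma isCompact_Wset {q : Option Lambda} {t : Lambda} (hq : precLt q t) (i : ℤˣ) :
    IsCompact (Wset q t i) := by
  rw [Wset_eq_image_branchPt]
  exact (isCompact_setOf_precLt_restrict hq).image (continuous_branchPt t i)

instance : WeaklyLocallyCompactSpace Dup :=
  ⟨fun ⟨t, i⟩ => ⟨_, isCompact_Wset (precLt_none t) i,
    (isOpen_Wset (precLt_none t) i).mem_nhds (mem_Wset_self (precLt_none t) i)⟩⟩

/-! ### Scatteredness and property (*) -/

def IsScattered (X : Type*) [TopologicalSpace X] : Prop :=
  ∀ E : Set X, E.Nonempty → ∃ x ∈ E, ∃ U : Set X, IsOpen U ∧ U ∩ E = {x}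

lemma IsScattered.onePoint {X : Type*} [TopologicalSpace X] (hX : IsScattered X) :
    IsScattered (OnePoint X) := by
  intro E hE
  by_cases h : ∃ x : X, (x : OnePoint X) ∈ E
  · obtain ⟨x, hx, U, hU, hUE⟩ := hX (((↑) : X → OnePoint X) ⁻¹' E) h
    refine ⟨x, hx.out, _, OnePoint.isOpen_image_coe.2 hU, ?_⟩
    rw [← Set.image_singleton, ← hUE, Set.image_inter_preimage]
  · push Not at h
    have hE' : E = {OnePoint.infty} := by
      refine (Set.subset_singleton_iff_eq.1 fun y hy => ?_).resolve_left hE.ne_empty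
      induction y using OnePoint.rec with
      | infty => rfl
      | coe x => exact absurd hy (h x)
    exact ⟨_, hE' ▸ Set.mem_singleton _, Set.univ, isOpen_univ, by rw [Set.univ_inter, hE']⟩

/-- A point of minimal height in `E` is isolated in `E` by `W(0, t, i)`. -/
lemma isScattered_dup : IsScattered Dup := by
  intro E hE
  obtain ⟨⟨t, i⟩, hE, hmin⟩ := (InvImage.wf (fun p : Dup => p.1.dom) wellFounded_lt).has_min E hE
  refine ⟨_, hE, _, isOpen_Wset (precLt_none t) i, Set.eq_singleton_iff_unique_mem.2
    ⟨⟨mem_Wset_self (precLt_none t) i, hE⟩, fun ⟨s, j⟩ ⟨hp, hpE⟩ => ?_⟩⟩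
  obtain ⟨⟨-, hst⟩, hj⟩ := mem_Wset.1 hp
  dsimp only at hst hj
  obtain rfl : s = t := le_antisymm hst
    (Lambda.le_of_le_of_dom_le le_rfl hst (not_lt.1 (hmin _ hpE)))
  rw [hj, Lambda.ell_self, pow_zero, one_mul]

lemma subsingleton_pair_inter {X : Type*} {x y : X} {V : Set X} (h : x ∈ V → y ∉ V) :
    (({x, y} : Set X) ∩ V).Subsingleton := by
  rintro a ⟨rfl | rfl, ha⟩ b ⟨rfl | rfl, hb⟩
  exacts [rfl, absurd hb (h ha), absurd ha (h hb), rfl]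

/-- The extra family `{X}` separates `∞` from the points of `X`. -/
def onePointFamily {X : Type*} (U : ℕ → Set (Set X)) : ℕ → Set (Set (OnePoint X))
  | 0 => {Set.range ((↑) : X → OnePoint X)}
  | n + 1 => Set.image (Set.image (↑)) (U n)

lemma HasStarProp.onePoint {X : Type*} [TopologicalSpace X] (hX : HasStarProp X) :
    HasStarProp (OnePoint X) := by
  obtain ⟨U, hUo, hU⟩ := hX
  refine ⟨onePointFamily U, ?_, ?_⟩
  · rintro (_ | n) V hV
    · rw [onePointFamily, Set.mem_singleton_iff] at hV
      exact hV ▸ OnePoint.isOpen_range_coe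
    · obtain ⟨V, hV, rfl⟩ := hV
      exact OnePoint.isOpen_image_coe.2 (hUo n V hV)
  have hinfty : ∀ x : X, ∃ n,
      (({(x : OnePoint X), OnePoint.infty} : Set (OnePoint X)) ∩
        ⋃₀ onePointFamily U n).Nonempty ∧
      ∀ V ∈ onePointFamily U n,
        (({(x : OnePoint X), OnePoint.infty} : Set (OnePoint X)) ∩ V).Subsingleton := by
    refine fun x => ⟨0, ⟨x, Or.inl rfl, Set.mem_sUnion_of_mem (Set.mem_range_self x)
      (Set.mem_singleton _)⟩, fun V hV => ?_⟩
    rw [onePointFamily, Set.mem_singleton_iff] at hV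
    refine subsingleton_pair_inter fun _ h => ?_
    obtain ⟨y, hy⟩ := hV ▸ h
    exact OnePoint.coe_ne_infty y hy
  intro x y hxy
  induction x using OnePoint.rec with
  | infty =>
    induction y using OnePoint.rec with
    | infty => exact absurd rfl hxy
    | coe y => simpa only [Set.pair_comm] using hinfty y
  | coe x =>
    induction y using OnePoint.rec with
    | infty => exact hinfty x
    | coe y =>
      obtain ⟨n, ⟨z, hz, V, hV, hzV⟩, hsep⟩ := hU x y fun h => hxy (h ▸ rfl)
      refine ⟨n + 1, ⟨z, ?_, Set.mem_sUnion_of_mem (Set.mem_image_of_mem _ hzV)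
        ⟨V, hV, rfl⟩⟩, ?_⟩
      · rcases hz with rfl | rfl
        exacts [Or.inl rfl, Or.inr rfl]
      · rintro _ ⟨V, hV, rfl⟩
        rw [← Set.image_pair, ← Set.image_inter OnePoint.coe_injective]
        exact (hsep V hV).image _

def starFamily : ℕ → Set (Set Dup)
  | 0 => WBasis
  | m + 1 => {S | ∃ r t i, r < t ∧ (∃ ξ ≤ r.dom, t.toFun ξ = m) ∧ S = Wset (some r) t i}

lemma isOpen_of_mem_starFamily {n : ℕ} {V : Set Dup} (hV : V ∈ starFamily n) : IsOpen V := by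
  cases n with
  | zero => exact isTopologicalBasis_WBasis.isOpen hV
  | succ m =>
    obtain ⟨r, t, i, hrt, -, rfl⟩ := hV
    exact isOpen_Wset (r := some r) hrt i

/-- Take `m` the minimum of `t` on `[dom s, dom t)`: a set `W(r, u, k)` of the family indexed by
`m` containing both `s` and `t` would see the value `m` twice in `u`. -/
lemma starFamily_separates_of_lt {s t : Lambda} (hst : s < t) (i j : ℤˣ) : ∃ n,
    (({(s, i), (t, j)} : Set Dup) ∩ ⋃₀ starFamily n).Nonempty ∧
      ∀ V ∈ starFamily n, (({(s, i), (t, j)} : Set Dup) ∩ V).Subsingleton := by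
  obtain ⟨hsξ, hξt, hmin⟩ := minPos_spec t.toFun (Lambda.dom_strictMono hst)
  set ξ := minPos t.toFun s.dom t.dom
  refine ⟨t.toFun ξ + 1, ⟨(t, j), Or.inr rfl, Set.mem_sUnion_of_mem
    (mem_Wset_self (r := some (t.restrict ξ)) (Lambda.restrict_lt hξt) j)
    ⟨t.restrict ξ, t, j, Lambda.restrict_lt hξt, ⟨ξ, (Lambda.restrict_dom_of_le hξt.le).ge, rfl⟩,
      rfl⟩⟩, ?_⟩
  rintro _ ⟨r, u, k, hru, ⟨ξ', hξ'r, hξ'⟩, rfl⟩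
  refine subsingleton_pair_inter fun hs ht => ?_
  obtain ⟨⟨hrs, -⟩, -⟩ := mem_Wset.1 hs
  obtain ⟨⟨-, htu⟩, -⟩ := mem_Wset.1 ht
  have hξ's : ξ' < s.dom := hξ'r.trans_lt (Lambda.dom_strictMono hrs)
  have : ξ' = ξ := u.inj ξ' ξ (hξ's.trans (Lambda.dom_strictMono (lt_of_lt_of_le hst htu)))
    (hξt.trans_le (Lambda.dom_mono htu)) (by rw [hξ', Lambda.toFun_eq_of_le htu hξt])
  exact hsξ.not_gt (this ▸ hξ's)

lemma hasStarProp_dup : HasStarProp Dup := by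
  refine ⟨starFamily, fun _ _ => isOpen_of_mem_starFamily, fun ⟨s, i⟩ ⟨t, j⟩ hne => ?_⟩
  have hcover : (({(s, i), (t, j)} : Set Dup) ∩ ⋃₀ starFamily 0).Nonempty :=
    ⟨(s, i), Or.inl rfl, Set.mem_sUnion_of_mem (mem_Wset_self (precLt_none s) i)
      ⟨none, s, i, precLt_none s, rfl⟩⟩
  by_cases hst : s ≤ t <;> by_cases hts : t ≤ s
  · obtain rfl := le_antisymm hst hts
    refine ⟨0, hcover, ?_⟩
    rintro _ ⟨r, u, k, -, rfl⟩
    refine subsingleton_pair_inter fun hi hj => hne ?_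
    have hi' := (mem_Wset.1 hi).2
    have hj' := (mem_Wset.1 hj).2
    dsimp only at hi' hj'
    rw [hi', hj']
  · exact starFamily_separates_of_lt (lt_of_le_not_ge hst hts) i j
  · simpa only [Set.pair_comm] using starFamily_separates_of_lt (lt_of_le_not_ge hts hst) j i
  · refine ⟨0, hcover, ?_⟩
    rintro _ ⟨r, u, k, -, rfl⟩
    refine subsingleton_pair_inter fun hi hj => ?_
    rcases Lambda.le_total_of_le (mem_Wset.1 hi).1.2 (mem_Wset.1 hj).1.2 with h | h
    exacts [hst h, hts h]

/-! ### Extensions and unions of chains -/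

namespace Lambda

def root : Lambda where
  toFun _ := 0
  dom := 0
  countable := by simp
  inj _ _ h := absurd h not_lt_zero
  coinfinite := by simpa using Set.infinite_univ
  junk _ _ := rfl

noncomputable def extend (t : Lambda) (v : ℕ) (hv : v ∉ t.range) : Lambda where
  toFun β := if β < t.dom then t.toFun β else if β = t.dom then v else 0
  dom := t.dom + 1
  countable := by
    rw [Ordinal.card_add, Ordinal.card_one]
    exact Cardinal.add_le_aleph0.2 ⟨t.countable, Cardinal.one_le_aleph0⟩
  inj β γ hβ hγ he := by
    rw [Order.lt_add_one_iff] at hβ hγ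
    rcases hβ.lt_or_eq with hβ | rfl <;> rcases hγ.lt_or_eq with hγ | rfl
    · simp only [if_pos hβ, if_pos hγ] at he
      exact t.inj β γ hβ hγ he
    · simp only [if_pos hβ, lt_irrefl, if_false, if_true] at he
      exact absurd ⟨β, hβ, he⟩ hv
    · simp only [if_pos hγ, lt_irrefl, if_false, if_true] at he
      exact absurd ⟨γ, hγ, he.symm⟩ hv
    · rfl
  coinfinite := by
    refine (t.coinfinite.sdiff (Set.finite_singleton v)).mono fun n hn β hβ => ?_
    obtain ⟨hn, hnv⟩ := hn
    rcases (Order.lt_add_one_iff.1 hβ).lt_or_eq with hβ | rfl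
    · simpa only [if_pos hβ] using hn β hβ
    · simpa only [lt_irrefl, if_false, if_true] using Ne.symm hnv
  junk β hβ := by
    have : t.dom < β := lt_of_lt_of_le (Order.lt_add_one_iff.2 le_rfl) (not_lt.1 hβ)
    simp only [if_neg this.not_gt, if_neg this.ne']

lemma lt_extend (t : Lambda) {v : ℕ} (hv : v ∉ t.range) : t < t.extend v hv :=
  lt_iff_le_and_dom_lt.2 ⟨le_iff.2 ⟨(Order.lt_add_one_iff.2 le_rfl).le,
    fun _ hβ => (if_pos hβ).symm⟩, Order.lt_add_one_iff.2 le_rfl⟩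

lemma mem_range_extend {t : Lambda} {v : ℕ} {hv : v ∉ t.range} {x : ℕ} :
    x ∈ (t.extend v hv).range ↔ x = v ∨ x ∈ t.range := by
  constructor
  · rintro ⟨β, hβ, rfl⟩
    rcases (Order.lt_add_one_iff.1 (Set.mem_Iio.1 hβ)).lt_or_eq with hβ | rfl
    · exact Or.inr ⟨β, hβ, (if_pos hβ).symm⟩
    · exact Or.inl (by simp [extend])
  · rintro (rfl | hx)
    · exact ⟨t.dom, Set.mem_Iio.2 (Order.lt_add_one_iff.2 le_rfl), by simp [extend]⟩
    · exact range_mono (lt_extend t hv).le hx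

lemma runningMinima_extend (t : Lambda) {v : ℕ} (hv : v ∉ t.range) :
    runningMinima t.dom (t.extend v hv).toFun (t.extend v hv).dom = {t.dom} :=
  Set.eq_singleton_iff_unique_mem.2 ⟨⟨le_rfl, Order.lt_add_one_iff.2 le_rfl,
    fun _ h₁ h₂ => absurd h₂ h₁.not_gt⟩, fun _ h => le_antisymm (Order.lt_add_one_iff.1 h.2.1) h.1⟩

lemma ell_extend_self (t : Lambda) {v : ℕ} (hv : v ∉ t.range) : ell t (t.extend v hv) = 1 := by
  rw [ell_eq_ncard, runningMinima_extend, Set.ncard_singleton]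

lemma ell_extend_of_lt {s t : Lambda} (hst : s < t) {v : ℕ} (hv : v ∉ t.range)
    (hvs : t.toFun s.dom ≤ v) : ell s (t.extend v hv) = ell s t := by
  refine ell_eq_of_forall_exists_le hst.le (lt_extend t hv).le fun ξ hξ => ?_
  rw [runningMinima_extend, Set.mem_singleton_iff] at hξ
  refine ⟨s.dom, le_rfl, dom_strictMono hst, ?_⟩
  rw [hξ]
  simpa [extend, dom_strictMono hst] using hvs

variable {T : ℕ → Lambda}

lemma toFun_eq_of_monotone (hT : Monotone T) {β : Ordinal} {i j : ℕ} (hi : β < (T i).dom)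
    (hj : β < (T j).dom) : (T i).toFun β = (T j).toFun β := by
  rcases le_total i j with h | h
  · exact toFun_eq_of_le (hT h) hi
  · exact (toFun_eq_of_le (hT h) hj).symm

lemma card_iSup_dom_le (T : ℕ → Lambda) : (⨆ k, (T k).dom).card ≤ Cardinal.aleph0 := by
  have key : ∀ o : Ordinal.{0}, o.card ≤ Cardinal.aleph0 ↔ o < Ordinal.omega 1 := fun o => by
    rw [← Cardinal.ord_aleph, Cardinal.lt_ord, ← Cardinal.succ_aleph0, Order.lt_succ_iff]
  exact (key _).2 (Ordinal.iSup_lt_omega_one fun k => (key _).1 (T k).countable)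

open Classical in
noncomputable def chainFun (T : ℕ → Lambda) (β : Ordinal.{0}) : ℕ :=
  if h : ∃ k, β < (T k).dom then (T h.choose).toFun β else 0

lemma chainFun_eq (hT : Monotone T) {β : Ordinal} {k : ℕ} (hk : β < (T k).dom) :
    chainFun T β = (T k).toFun β := by
  have h : ∃ k, β < (T k).dom := ⟨k, hk⟩
  rw [chainFun, dif_pos h, toFun_eq_of_monotone hT h.choose_spec hk]

noncomputable def iSupChain (T : ℕ → Lambda) (hT : Monotone T)
    (hco : (⋃ k, (T k).range)ᶜ.Infinite) : Lambda where
  toFun := chainFun T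
  dom := ⨆ k, (T k).dom
  countable := card_iSup_dom_le T
  inj β γ hβ hγ he := by
    obtain ⟨i, hi⟩ := Ordinal.lt_iSup_iff.1 hβ
    obtain ⟨j, hj⟩ := Ordinal.lt_iSup_iff.1 hγ
    replace hi := hi.trans_le (dom_mono (hT (le_max_left i j)))
    replace hj := hj.trans_le (dom_mono (hT (le_max_right i j)))
    rw [chainFun_eq hT hi, chainFun_eq hT hj] at he
    exact (T (max i j)).inj β γ hi hj he
  coinfinite := hco.mono fun n hn β hβ => by
    obtain ⟨k, hk⟩ := Ordinal.lt_iSup_iff.1 hβ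
    rw [chainFun_eq hT hk]
    exact fun he => hn (Set.mem_iUnion.2 ⟨k, β, hk, he⟩)
  junk β hβ := dif_neg fun ⟨k, hk⟩ => hβ (hk.trans_le (Ordinal.le_iSup _ k))

variable {hT : Monotone T} {hco : (⋃ k, (T k).range)ᶜ.Infinite}

lemma le_iSupChain (k : ℕ) : T k ≤ iSupChain T hT hco :=
  le_iff.2 ⟨Ordinal.le_iSup _ k, fun _ hβ => (chainFun_eq hT hβ).symm⟩

lemma lt_iSupChain (hT' : StrictMono T) (k : ℕ) : T k < iSupChain T hT hco :=
  lt_of_lt_of_le (hT' k.lt_succ_self) (le_iSupChain (k + 1))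

lemma range_iSupChain_subset : (iSupChain T hT hco).range ⊆ ⋃ k, (T k).range := by
  rintro _ ⟨β, hβ, rfl⟩
  obtain ⟨k, hk⟩ := Ordinal.lt_iSup_iff.1 hβ
  exact Set.mem_iUnion.2 ⟨k, β, hk, (chainFun_eq hT hk).symm⟩

/-- The finitely many steps of the walk from the union down to `s` all happen inside some `T m`,
so the walk is eventually that from `T m`. -/
lemma eventually_ell_iSupChain_eq (s : Lambda) :
    ∀ᶠ k in Filter.atTop, s ≤ T k → ell s (iSupChain T hT hco) = ell s (T k) := by
  have : ∀ᶠ k in Filter.atTop, ∀ ξ ∈ runningMinima s.dom (iSupChain T hT hco).toFun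
      (iSupChain T hT hco).dom, ξ < (T k).dom :=
    (Filter.eventually_all_finite runningMinima_finite).2 fun ξ hξ =>
      let ⟨k, hk⟩ := Ordinal.lt_iSup_iff.1 hξ.2.1
      Filter.eventually_atTop.2 ⟨k, fun m hm => hk.trans_le (dom_mono (hT hm))⟩
  filter_upwards [this] with k hk hsk
  exact ell_eq_of_forall_runningMinima_lt hsk (le_iSupChain k) hk

end Lambda

/-! ### A diagonal chain with odd walks -/

namespace OddChain

/-- A finite stage of the construction: the nodes built so far (the last one on top) and the
values reserved so far, which all later nodes avoid. -/
structure Stage where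
  nodes : List Lambda
  reserved : List ℕ

namespace Stage

variable (S : Stage)

noncomputable def top : Lambda := S.nodes.getLastD Lambda.root

def IsExt (u : Lambda) : Prop :=
  S.top < u ∧ (∀ x ∈ S.reserved, x ∉ u.range) ∧ ∀ s ∈ S.nodes, Odd (ell s u)

def Valid : Prop :=
  (∀ s ∈ S.nodes, s = S.top ∨ s < S.top ∧ Odd (ell s S.top)) ∧ ∀ x ∈ S.reserved, x ∉ S.top.range

/-- Taking the new value above `top (dom s)` for all nodes `s` keeps `ℓ(s, ·)` unchanged. -/
lemma exists_freshValue : ∃ v, v ∉ S.top.range ∧ v ∉ S.reserved ∧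
    ∀ s ∈ S.nodes, S.top.toFun s.dom ≤ v := by
  obtain ⟨v, hv, hNv⟩ := (S.top.infinite_compl_range.sdiff S.reserved.finite_toSet).exists_gt
    (S.nodes.map fun s => S.top.toFun s.dom).sum
  exact ⟨v, hv.1, hv.2, fun s hs => (List.le_sum_of_mem (List.mem_map_of_mem hs)).trans hNv.le⟩

noncomputable def plainExt : Lambda :=
  S.top.extend S.exists_freshValue.choose S.exists_freshValue.choose_spec.1

lemma Valid.isExt_plainExt {S : Stage} (hS : S.Valid) : S.IsExt S.plainExt := by
  obtain ⟨hv, hres, hle⟩ := S.exists_freshValue.choose_spec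
  refine ⟨Lambda.lt_extend _ _, fun x hx hx' => ?_, fun s hs => ?_⟩
  · rcases Lambda.mem_range_extend.1 hx' with rfl | hx'
    exacts [hres hx, hS.2 x hx hx']
  · rcases hS.1 s hs with rfl | ⟨hst, hodd⟩
    · rw [plainExt, Lambda.ell_extend_self]
      exact odd_one
    · rwa [plainExt, Lambda.ell_extend_of_lt hst _ (hle s hs)]

lemma exists_reserveValue (u : Lambda) : ∃ w, w ∉ u.range ∧ w ∉ S.reserved :=
  (u.infinite_compl_range.sdiff S.reserved.finite_toSet).nonempty

noncomputable def reserveValue (u : Lambda) : ℕ := (S.exists_reserveValue u).choose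

noncomputable def push (u : Lambda) : Stage :=
  ⟨S.nodes ++ [u], S.reserved ++ [S.reserveValue u]⟩

lemma top_push (u : Lambda) : (S.push u).top = u := List.getLastD_concat

lemma Valid.push {S : Stage} (hS : S.Valid) {u : Lambda} (hu : S.IsExt u) : (S.push u).Valid := by
  obtain ⟨hw, -⟩ := (S.exists_reserveValue u).choose_spec
  rw [Valid, top_push]
  refine ⟨fun s hs => ?_, fun x hx => ?_⟩
  · rcases List.mem_append.1 hs with hs | hs
    · refine Or.inr ⟨?_, hu.2.2 s hs⟩
      rcases hS.1 s hs with rfl | ⟨hst, -⟩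
      exacts [hu.1, hst.trans hu.1]
    · exact Or.inl (List.mem_singleton.1 hs)
  · rcases List.mem_append.1 hx with hx | hx
    · exact hu.2.1 x hx
    · exact List.mem_singleton.1 hx ▸ hw

end Stage

variable {α : Type*} (c : Lambda → α) (ρ : Lambda → Ordinal.{0})

/-- The task `τ = (a, j)` asks for color `a` and a `ρ`-value below the domain of the `j`-th
node. -/
def IsGoodExt (S : Stage) (τ : α × ℕ) (u : Lambda) : Prop :=
  S.IsExt u ∧ c u = τ.1 ∧ ρ u < (S.nodes.getD τ.2 Lambda.root).dom

open Classical in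
noncomputable def nextNode (S : Stage) : Option (α × ℕ) → Lambda
  | some τ => if h : ∃ u, IsGoodExt c ρ S τ u then h.choose else S.plainExt
  | none => S.plainExt

lemma isExt_nextNode {S : Stage} (hS : S.Valid) (o : Option (α × ℕ)) :
    S.IsExt (nextNode c ρ S o) := by
  cases o with
  | none => exact hS.isExt_plainExt
  | some τ =>
    rw [nextNode]
    split_ifs with h
    exacts [h.choose_spec.1, hS.isExt_plainExt]

lemma isGoodExt_nextNode {S : Stage} {τ : α × ℕ} (h : ∃ u, IsGoodExt c ρ S τ u) :
    IsGoodExt c ρ S τ (nextNode c ρ S (some τ)) := by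
  rw [nextNode, dif_pos h]
  exact h.choose_spec

variable [Encodable α]

/-- Stage `k` works on the task coded by `k.unpair.1`, so every task comes up infinitely often. -/
def task (k : ℕ) : Option (α × ℕ) := Encodable.decode k.unpair.1

lemma exists_task_eq (τ : α × ℕ) (N : ℕ) : ∃ k ≥ N, task k = some τ :=
  ⟨Nat.pair (Encodable.encode τ) N, Nat.right_le_pair _ _, by
    rw [task, Nat.unpair_pair, Encodable.encodek]⟩

noncomputable def stage : ℕ → Stage
  | 0 => ⟨[Lambda.root], []⟩
  | k + 1 => (stage k).push (nextNode c ρ (stage k) (task k))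

noncomputable def node (k : ℕ) : Lambda := (stage c ρ k).top

lemma node_succ (k : ℕ) : node c ρ (k + 1) = nextNode c ρ (stage c ρ k) (task k) :=
  Stage.top_push _ _

lemma valid_stage (k : ℕ) : (stage c ρ k).Valid := by
  induction k with
  | zero =>
    refine ⟨fun s hs => Or.inl ?_, fun x hx => absurd hx List.not_mem_nil⟩
    rw [List.mem_singleton.1 hs]
    rfl
  | succ k ih => exact ih.push (isExt_nextNode c ρ ih _)

lemma isExt_node_succ (k : ℕ) : (stage c ρ k).IsExt (node c ρ (k + 1)) :=
  node_succ c ρ k ▸ isExt_nextNode c ρ (valid_stage c ρ k) _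

lemma strictMono_node : StrictMono (node c ρ) :=
  strictMono_nat_of_lt_succ fun k => (isExt_node_succ c ρ k).1

lemma stage_nodes (k : ℕ) : (stage c ρ k).nodes = (List.range (k + 1)).map (node c ρ) := by
  induction k with
  | zero => rfl
  | succ k ih =>
    rw [List.range_succ, List.map_append, ← ih, List.map_singleton, node_succ]
    rfl

lemma mem_stage_nodes {k : ℕ} {s : Lambda} : s ∈ (stage c ρ k).nodes ↔ ∃ i ≤ k, node c ρ i = s := by
  simp [stage_nodes]

lemma getD_stage_nodes {j k : ℕ} (h : j ≤ k) :
    (stage c ρ k).nodes.getD j Lambda.root = node c ρ j := by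
  rw [stage_nodes, List.getD_eq_getElem _ _ (by simp; omega), List.getElem_map,
    List.getElem_range]

lemma odd_ell_node {i j : ℕ} (h : i < j) : Odd (ell (node c ρ i) (node c ρ j)) := by
  rcases (valid_stage c ρ j).1 _ ((mem_stage_nodes c ρ).2 ⟨i, h.le, rfl⟩) with he | ⟨-, hodd⟩
  · exact absurd he (strictMono_node c ρ h).ne
  · exact hodd

noncomputable def reserved (k : ℕ) : ℕ := (stage c ρ k).reserveValue (node c ρ (k + 1))

lemma stage_reserved (k : ℕ) : (stage c ρ k).reserved = (List.range k).map (reserved c ρ) := by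
  induction k with
  | zero => rfl
  | succ k ih =>
    rw [List.range_succ, List.map_append, ← ih, List.map_singleton, reserved, node_succ]
    rfl

lemma reserved_notMem_range (k m : ℕ) : reserved c ρ k ∉ (node c ρ m).range := by
  rcases lt_or_ge k m with h | h
  · exact (valid_stage c ρ m).2 _
      (by rw [stage_reserved]; exact List.mem_map_of_mem (List.mem_range.2 h))
  · exact fun hm => ((stage c ρ k).exists_reserveValue _).choose_spec.1
      (Lambda.range_mono ((strictMono_node c ρ).monotone (h.trans k.le_succ)) hm)

lemma reserved_injective : Function.Injective (reserved c ρ) := by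
  intro j k he
  by_contra hne
  wlog h : j < k generalizing j k
  · exact this he.symm (Ne.symm hne) ((Ne.lt_or_gt hne).resolve_left h)
  refine ((stage c ρ k).exists_reserveValue (node c ρ (k + 1))).choose_spec.2 ?_
  change reserved c ρ k ∈ _
  rw [← he, stage_reserved]
  exact List.mem_map_of_mem (List.mem_range.2 h)

lemma infinite_compl_iUnion_range : (⋃ m, (node c ρ m).range)ᶜ.Infinite :=
  (Set.infinite_range_of_injective (reserved_injective c ρ)).mono <| by
    rintro _ ⟨k, rfl⟩ hk
    obtain ⟨m, hm⟩ := Set.mem_iUnion.1 hk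
    exact reserved_notMem_range c ρ k m hm

noncomputable def limit : Lambda :=
  Lambda.iSupChain (node c ρ) (strictMono_node c ρ).monotone (infinite_compl_iUnion_range c ρ)

lemma isGoodExt_limit {j k : ℕ} (hjk : j ≤ k) (hρ : ρ (limit c ρ) < (node c ρ j).dom) :
    IsGoodExt c ρ (stage c ρ k) (c (limit c ρ), j) (limit c ρ) := by
  refine ⟨⟨Lambda.lt_iSupChain (strictMono_node c ρ) k, fun x hx hx' => ?_, fun s hs => ?_⟩,
    rfl, by rwa [getD_stage_nodes c ρ hjk]⟩
  · rw [stage_reserved] at hx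
    obtain ⟨i, -, rfl⟩ := List.mem_map.1 hx
    obtain ⟨m, hm⟩ := Set.mem_iUnion.1 (Lambda.range_iSupChain_subset hx')
    exact reserved_notMem_range c ρ i m hm
  · obtain ⟨i, -, rfl⟩ := (mem_stage_nodes c ρ).1 hs
    obtain ⟨m, hm, him⟩ :=
      ((Lambda.eventually_ell_iSupChain_eq _).and (Filter.eventually_gt_atTop i)).exists
    rw [limit, hm ((strictMono_node c ρ).monotone him.le)]
    exact odd_ell_node c ρ him

lemma exists_node_eq_color {j : ℕ} (hρ : ρ (limit c ρ) < (node c ρ j).dom) (N : ℕ) :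
    ∃ k ≥ N, c (node c ρ (k + 1)) = c (limit c ρ) ∧ ρ (node c ρ (k + 1)) < (node c ρ j).dom := by
  obtain ⟨k, hk, htask⟩ := exists_task_eq (c (limit c ρ), j) (max N j)
  obtain ⟨-, hc, hρk⟩ := node_succ c ρ k ▸ htask ▸
    isGoodExt_nextNode c ρ ⟨_, isGoodExt_limit c ρ (le_of_max_le_right hk) hρ⟩
  exact ⟨k, le_of_max_le_left hk, hc, by rwa [getD_stage_nodes c ρ (le_of_max_le_right hk)] at hρk⟩

end OddChain

/-- The three nodes lie on an `ω`-chain that, at each stage, adds a good extension for the task of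
that stage if there is one. The union of the chain is such an extension for the tasks of its own
color, so the chain meets that color again and again. -/
theorem Lambda.exists_odd_triple {α : Type*} [Countable α] (c : Lambda → α)
    (ρ : Lambda → Ordinal.{0}) (hρ : ∀ u, 0 < u.dom → ρ u < u.dom) :
    ∃ z c₁ c₂ : Lambda, z < c₁ ∧ c₁ < c₂ ∧ c c₁ = c z ∧ c c₂ = c z ∧ ρ c₁ < z.dom ∧
      ρ c₂ < z.dom ∧ Odd (ell z c₁) ∧ Odd (ell z c₂) ∧ Odd (ell c₁ c₂) := by
  have := Encodable.ofCountable α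
  have hmono := OddChain.strictMono_node c ρ
  obtain ⟨j, hj⟩ : ∃ j, ρ (OddChain.limit c ρ) < (OddChain.node c ρ j).dom :=
    Ordinal.lt_iSup_iff.1 (hρ _ (zero_le.trans_lt (dom_strictMono (lt_iSupChain hmono 0))))
  obtain ⟨k₁, hk₁, hc₁, -⟩ := OddChain.exists_node_eq_color c ρ hj j
  have hz : ρ (OddChain.limit c ρ) < (OddChain.node c ρ (k₁ + 1)).dom :=
    hj.trans_le (dom_mono (hmono.monotone (by omega)))
  obtain ⟨k₂, hk₂, hc₂, hρ₂⟩ := OddChain.exists_node_eq_color c ρ hz (k₁ + 1)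
  obtain ⟨k₃, hk₃, hc₃, hρ₃⟩ := OddChain.exists_node_eq_color c ρ hz (k₂ + 1)
  exact ⟨_, _, _, hmono (by omega), hmono (by omega), hc₂.trans hc₁.symm, hc₃.trans hc₁.symm,
    hρ₂, hρ₃, OddChain.odd_ell_node c ρ (by omega), OddChain.odd_ell_node c ρ (by omega),
    OddChain.odd_ell_node c ρ (by omega)⟩

/-! ### The Gruenhage property fails -/

lemma mem_Wset_neg_of_odd {q : Option Lambda} {s t : Lambda} (hq : precLt q t) (hst : s < t)
    (hd : domOpt q < s.dom) (hodd : Odd (ell s t)) (i : ℤˣ) : ((s, -i) : Dup) ∈ Wset q t i :=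
  mem_Wset.2 ⟨⟨precLt_of_le hq hst.le hd, hst.le⟩, by rw [hodd.neg_one_pow, neg_one_mul]⟩

lemma mem_or_mem_of_pair_inter_eq_singleton {X : Type*} {x y z : X} {V : Set X} (hxy : x ≠ y)
    (h : ({x, y} : Set X) ∩ V = {z}) : (x ∈ V ∧ y ∉ V) ∨ (y ∈ V ∧ x ∉ V) := by
  have hz : z ∈ ({x, y} : Set X) ∩ V := h ▸ rfl
  have hmem : ∀ w ∈ ({x, y} : Set X), w ∈ V → w = z := fun w hw hwV => by
    have hw' : w ∈ ({x, y} : Set X) ∩ V := ⟨hw, hwV⟩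
    rwa [h] at hw'
  rcases hz.1 with rfl | rfl
  · exact Or.inl ⟨hz.2, fun hy => hxy (hmem y (Or.inr rfl) hy).symm⟩
  · exact Or.inr ⟨hz.2, fun hx => hxy (hmem x (Or.inl rfl) hx)⟩

lemma mem_of_pairwise_inter_eq {X : Type*} {U : Set (Set X)} {R : Set X}
    (hR : ∀ V ∈ U, ∀ V' ∈ U, V ≠ V' → V ∩ V' = R) {V₁ V₂ V₃ : Set X} (h₁ : V₁ ∈ U)
    (h₂ : V₂ ∈ U) (h₃ : V₃ ∈ U) (h₂₃ : V₂ ≠ V₃) {p : X} (hp₂ : p ∈ V₂) (hp₃ : p ∈ V₃) :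
    p ∈ V₁ := by
  by_cases h : V₁ = V₂
  · exact h ▸ hp₂
  · have hp : p ∈ V₁ ∩ V₂ := by
      rw [hR V₁ h₁ V₂ h₂ h, ← hR V₂ h₂ V₃ h₃ h₂₃]
      exact ⟨hp₂, hp₃⟩
    exact hp.1

theorem not_gruenhage_onePoint_dup : ¬ Gruenhage (OnePoint Dup) := by
  rintro ⟨U, R, hopen, hsep, hR⟩
  have hsign : ∀ u : Lambda, ∃ n e, ∃ V ∈ U n,
      (↑((u, e) : Dup) : OnePoint Dup) ∈ V ∧ (↑((u, -e) : Dup) : OnePoint Dup) ∉ V := fun u => by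
    have hne : (↑((u, 1) : Dup) : OnePoint Dup) ≠ ↑((u, -1) : Dup) :=
      OnePoint.coe_injective.ne (by simp)
    obtain ⟨n, V, hV, z, hz⟩ := hsep _ _ hne
    rcases mem_or_mem_of_pair_inter_eq_singleton hne hz with h | h
    · exact ⟨n, 1, V, hV, h⟩
    · exact ⟨n, -1, V, hV, by rwa [neg_neg]⟩
  choose n e V hVU hin hout using hsign
  choose q hq hqV using fun u => exists_Wset_subset_of_mem_nhds
    (((hopen _ _ (hVU u)).preimage OnePoint.continuous_coe).mem_nhds (hin u))
  obtain ⟨z, c₁, c₂, hzc₁, hc₁c₂, hc₁, hc₂, hρ₁, hρ₂, hodd₁, hodd₂, hodd₁₂⟩ :=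
    Lambda.exists_odd_triple (fun u => (n u, e u)) (fun u => domOpt (q u))
      fun u h0 => domOpt_lt_of_precLt (hq u) h0
  simp only [Prod.mk.injEq] at hc₁ hc₂
  have hz₁ := hqV c₁ (mem_Wset_neg_of_odd (hq c₁) hzc₁ hρ₁ hodd₁ (e c₁))
  have hz₂ := hqV c₂ (mem_Wset_neg_of_odd (hq c₂) (hzc₁.trans hc₁c₂) hρ₂ hodd₂ (e c₂))
  have hc₁₂ := hqV c₂ (mem_Wset_neg_of_odd (hq c₂) hc₁c₂
    (hρ₂.trans (Lambda.dom_strictMono hzc₁)) hodd₁₂ (e c₂))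
  rw [hc₁.2] at hz₁
  rw [hc₂.2] at hz₂ hc₁₂
  have hne : V c₁ ≠ V c₂ := fun h => hout c₁ (by rw [hc₁.2, h]; exact hc₁₂)
  exact hout z (mem_of_pairwise_inter_eq (hR (n z)) (hVU z) (hc₁.1 ▸ hVU c₁) (hc₂.1 ▸ hVU c₂)
    hne hz₁ hz₂)

/-- The one-point compactification `K` of the `Λ`-duplicate `D` is a scattered compact
Hausdorff space which has property (*) but is not Gruenhage. -/
theorem onePoint_dup_properties :
    (∀ E : Set (OnePoint Dup), E.Nonempty →
      ∃ x ∈ E, ∃ U : Set (OnePoint Dup), IsOpen U ∧ U ∩ E = {x}) ∧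
    CompactSpace (OnePoint Dup) ∧
    T2Space (OnePoint Dup) ∧
    HasStarProp (OnePoint Dup) ∧
    ¬ Gruenhage (OnePoint Dup) :=
  ⟨isScattered_dup.onePoint, inferInstance, inferInstance, hasStarProp_dup.onePoint,
    not_gruenhage_onePoint_dup⟩
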